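/- arXiv:2305.00175 — 4 statements merged into one kernel-verified Lean document; each statement's English description precedes it below -/
import Mathlib

section
/- Let A and B be finite sets of equal cardinality m, and let μ : A → B be a bijection in a metric space (𝒳, D). Then there exists a bijection μ̂ : A → B such that μ̂(x) = x for every x ∈ A ∩ B, and ∑_{x∈A} D(x, μ̂(x)) ≤ ∑_{x∈A} D(x, μ(x)). -/
/-!
Repeatedly remove a point `x ∈ A ∩ B` with `μ x ≠ x`: if `μ y = x`, precompose `μ` with the
transposition of `x` and `y`. The new map fixes `x`, sends `y` to `μ x`, and by the triangle
inequality `dist y (μ x) ≤ dist y x + dist x (μ x)` the total cost does not increase, while the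
set of non-fixed points of `A ∩ B` strictly shrinks.
-/

open Finset

section

variable {𝒳 : Type*} [DecidableEq 𝒳]

lemma sum_dist_comp_swap_le [PseudoMetricSpace 𝒳] {A : Finset 𝒳} {μ : 𝒳 → 𝒳} {x y : 𝒳}
    (hx : x ∈ A) (hy : y ∈ A) (hyx : μ y = x) :
    ∑ z ∈ A, dist z (μ (Equiv.swap x y z)) ≤ ∑ z ∈ A, dist z (μ z) := by
  rcases eq_or_ne x y with rfl | hxy
  · simp
  have hpair : {x, y} ⊆ A := insert_subset hx (singleton_subset_iff.2 hy)
  have hrest : ∑ z ∈ A \ {x, y}, dist z (μ (Equiv.swap x y z)) = ∑ z ∈ A \ {x, y}, dist z (μ z) :=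
    sum_congr rfl fun z hz => by
      simp only [mem_sdiff, mem_insert, mem_singleton, not_or] at hz
      rw [Equiv.swap_apply_of_ne_of_ne hz.2.1 hz.2.2]
  rw [← sum_sdiff hpair, ← sum_sdiff hpair (f := fun z => dist z (μ z)), hrest,
    sum_pair hxy, sum_pair hxy]
  simp only [Equiv.swap_apply_left, Equiv.swap_apply_right, hyx, dist_self, zero_add]
  gcongr
  calc dist y (μ x) ≤ dist y x + dist x (μ x) := dist_triangle _ _ _
    _ = dist x (μ x) + dist y x := add_comm _ _

lemma filter_comp_swap_ne_ssubset {S : Finset 𝒳} {μ : 𝒳 → 𝒳} {x y : 𝒳}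
    (hx : x ∈ S) (hμx : μ x ≠ x) (hyx : μ y = x) :
    {z ∈ S | μ (Equiv.swap x y z) ≠ z} ⊂ {z ∈ S | μ z ≠ z} := by
  refine ssubset_iff_of_subset ?_ |>.2 ⟨x, mem_filter.2 ⟨hx, hμx⟩, by simp [hyx]⟩
  intro z hz
  obtain ⟨hzS, hz⟩ := mem_filter.1 hz
  refine mem_filter.2 ⟨hzS, ?_⟩
  rcases eq_or_ne z x with rfl | hzx
  · simp [hyx] at hz
  rcases eq_or_ne z y with rfl | hzy
  · rwa [hyx, ne_comm]
  · rwa [Equiv.swap_apply_of_ne_of_ne hzx hzy] at hz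

theorem Set.BijOn.exists_fix_inter_sum_dist_le [PseudoMetricSpace 𝒳] {A B : Finset 𝒳}
    {μ : 𝒳 → 𝒳} (hμ : Set.BijOn μ ↑A ↑B) :
    ∃ ν : 𝒳 → 𝒳, Set.BijOn ν ↑A ↑B ∧ (∀ x ∈ A ∩ B, ν x = x) ∧
      ∑ x ∈ A, dist x (ν x) ≤ ∑ x ∈ A, dist x (μ x) := by
  induction hS : {z ∈ A ∩ B | μ z ≠ z} using Finset.strongInduction generalizing μ with
  | H S ih =>
    by_cases hfix : ∀ x ∈ A ∩ B, μ x = x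
    · exact ⟨μ, hμ, hfix, le_rfl⟩
    push Not at hfix
    obtain ⟨x, hx, hμx⟩ := hfix
    obtain ⟨y, hy, hyx⟩ := hμ.surjOn (Finset.mem_inter.1 hx).2
    have hxA : x ∈ A := (Finset.mem_inter.1 hx).1
    have hswap : Set.BijOn (μ ∘ Equiv.swap x y) ↑A ↑B :=
      hμ.comp (Equiv.swap_bijOn_self (iff_of_true (mem_coe.2 hxA) hy))
    obtain ⟨ν, hν, hνfix, hνsum⟩ :=
      ih _ (hS ▸ filter_comp_swap_ne_ssubset hx hμx hyx) hswap rfl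
    exact ⟨ν, hν, hνfix, hνsum.trans (sum_dist_comp_swap_le hxA hy hyx)⟩

end

theorem stmt_8_general {𝒳 : Type*} [MetricSpace 𝒳] [DecidableEq 𝒳]
    (A B : Finset 𝒳)
    (μ : 𝒳 → 𝒳) (hμ : Set.BijOn μ ↑A ↑B) :
    ∃ ν : 𝒳 → 𝒳, Set.BijOn ν ↑A ↑B ∧ (∀ x ∈ A ∩ B, ν x = x) ∧
      ∑ x ∈ A, dist x (ν x) ≤ ∑ x ∈ A, dist x (μ x) :=
  hμ.exists_fix_inter_sum_dist_le

theorem stmt_8 {𝒳 : Type*} [MetricSpace 𝒳] [DecidableEq 𝒳] (m : ℕ)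
    (A B : Finset 𝒳) (hA : A.card = m) (hB : B.card = m)
    (μ : 𝒳 → 𝒳) (hμ : Set.BijOn μ ↑A ↑B) :
    ∃ ν : 𝒳 → 𝒳, Set.BijOn ν ↑A ↑B ∧ (∀ x ∈ A ∩ B, ν x = x) ∧
      ∑ x ∈ A, dist x (ν x) ≤ ∑ x ∈ A, dist x (μ x) :=
  stmt_8_general A B μ hμ
end

section
/- In the setting of the swapped partition, for z = 1: ∑_{j=1}^k ∑_{x ∈ X'_j} D(x, f_j) ≤ ∑_{j=1}^k ∑_{x ∈ X_j} D(x, f_j) + ∑_{x ∈ X₀} D(x, μ̂(x)). -/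
/-! The swap replaces the points of `Xc j ∩ Xh` by their `μ`-preimages in `X₀`. Each such preimage
`x` is charged `dist x (f j) ≤ dist x (μ x) + dist (μ x) (f j)`; the second terms add up to the old
cost of `Xc j ∩ Xh`, and the first terms, over all `j`, to at most `∑ x ∈ X₀, dist x (μ x)`, since
every `x ∈ X₀` is a preimage for at most one cluster. -/

namespace Finset

variable {ι α M : Type*}

theorem sum_filter_comp_eq_sum_inter [AddCommMonoid M] [DecidableEq α] {s t : Finset α}
    {μ : α → α} (hμ : Set.BijOn μ s t) (A : Finset α) (g : α → M) :
    ∑ x ∈ s with μ x ∈ A ∩ t, g (μ x) = ∑ y ∈ A ∩ t, g y := by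
  refine sum_nbij μ (fun x hx => (mem_filter.mp hx).2)
    (hμ.injOn.mono fun x hx => (mem_filter.mp hx).1) ?_ fun _ _ => rfl
  intro y hy
  obtain ⟨x, hxs, rfl⟩ := hμ.surjOn (mem_inter.mp hy).2
  exact ⟨x, mem_filter.mpr ⟨hxs, hy⟩, rfl⟩

theorem sum_sum_filter_le_sum [AddCommMonoid M] [PartialOrder M] [IsOrderedAddMonoid M]
    [DecidableEq α] {s : Finset α} {t : Finset ι} {p : ι → α → Prop} [∀ i, DecidablePred (p i)]
    (hp : ∀ x ∈ s, ∀ i ∈ t, ∀ j ∈ t, p i x → p j x → i = j) {h : α → M}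
    (hh : ∀ x ∈ s, 0 ≤ h x) :
    ∑ i ∈ t, ∑ x ∈ s with p i x, h x ≤ ∑ x ∈ s, h x := by
  have hdisj : (t : Set ι).PairwiseDisjoint fun i => s.filter (p i) := by
    intro i hi j hj hij
    refine disjoint_left.mpr fun x hxi hxj => hij ?_
    rw [mem_filter] at hxi hxj
    exact hp x hxi.1 i hi j hj hxi.2 hxj.2
  rw [← sum_biUnion hdisj]
  exact sum_le_sum_of_subset_of_nonneg (biUnion_subset.mpr fun _ _ => filter_subset _ _)
    fun x hx _ => hh x hx

end Finset

open Finset in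
theorem sum_dist_sdiff_union_filter_le {α : Type*} [PseudoMetricSpace α] [DecidableEq α]
    {s t C : Finset α} {μ : α → α} (hμ : Set.BijOn μ s t) (hsC : Disjoint s C) (c : α) :
    ∑ x ∈ (C \ t) ∪ s.filter (fun x => μ x ∈ C ∩ t), dist x c
      ≤ ∑ x ∈ C, dist x c + ∑ x ∈ s with μ x ∈ C ∩ t, dist x (μ x) := by
  have hdisj : Disjoint (C \ t) (s.filter fun x => μ x ∈ C ∩ t) :=
    disjoint_of_subset_left sdiff_subset (disjoint_of_subset_right (filter_subset _ _) hsC.symm)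
  have htriangle : ∑ x ∈ s with μ x ∈ C ∩ t, dist x c
      ≤ ∑ x ∈ s with μ x ∈ C ∩ t, dist x (μ x) + ∑ y ∈ C ∩ t, dist y c := by
    rw [← sum_filter_comp_eq_sum_inter hμ C (dist · c), ← sum_add_distrib]
    exact sum_le_sum fun x _ => dist_triangle x (μ x) c
  rw [sum_union hdisj, ← sum_inter_add_sum_sdiff C t]
  linarith

theorem stmt_11_general {𝒳 : Type*} [MetricSpace 𝒳] [DecidableEq 𝒳]
    (X₀ Xh : Finset 𝒳) (k : ℕ) (Xc : Fin k → Finset 𝒳) (f : Fin k → 𝒳) (μ : 𝒳 → 𝒳)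
    (hdisj : ∀ i j, i ≠ j → Disjoint (Xc i) (Xc j))
    (hdisj0 : ∀ i, Disjoint X₀ (Xc i))
    (hbij : Set.BijOn μ ↑X₀ ↑Xh) :
    ∑ j, ∑ x ∈ (Xc j \ Xh) ∪ X₀.filter (fun x => μ x ∈ Xc j ∩ Xh), dist x (f j)
      ≤ ∑ j, ∑ x ∈ Xc j, dist x (f j) + ∑ x ∈ X₀, dist x (μ x) := by
  have hunique : ∀ x ∈ X₀, ∀ i ∈ Finset.univ, ∀ j ∈ Finset.univ,
      μ x ∈ Xc i ∩ Xh → μ x ∈ Xc j ∩ Xh → i = j := fun x _ i _ j _ hi hj => by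
    by_contra hij
    exact Finset.disjoint_left.mp (hdisj i j hij) (Finset.mem_inter.mp hi).1
      (Finset.mem_inter.mp hj).1
  calc _ ≤ ∑ j, (∑ x ∈ Xc j, dist x (f j) + ∑ x ∈ X₀ with μ x ∈ Xc j ∩ Xh, dist x (μ x)) :=
        Finset.sum_le_sum fun j _ => sum_dist_sdiff_union_filter_le hbij (hdisj0 j) (f j)
    _ = ∑ j, ∑ x ∈ Xc j, dist x (f j) + ∑ j, ∑ x ∈ X₀ with μ x ∈ Xc j ∩ Xh, dist x (μ x) :=
        Finset.sum_add_distrib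
    _ ≤ _ := by
        gcongr
        exact Finset.sum_sum_filter_le_sum hunique fun _ _ => dist_nonneg

theorem stmt_11 {𝒳 : Type*} [MetricSpace 𝒳] [DecidableEq 𝒳]
    (X X₀ Xh : Finset 𝒳) (k : ℕ) (Xc : Fin k → Finset 𝒳) (f : Fin k → 𝒳) (μ : 𝒳 → 𝒳)
    (h0 : X₀ ⊆ X) (hh : Xh ⊆ X) (hcard : Xh.card = X₀.card)
    (hdisj : ∀ i j, i ≠ j → Disjoint (Xc i) (Xc j))
    (hdisj0 : ∀ i, Disjoint X₀ (Xc i))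
    (hcover : X₀ ∪ Finset.univ.biUnion Xc = X)
    (hbij : Set.BijOn μ ↑X₀ ↑Xh)
    (hid : ∀ x ∈ X₀ ∩ Xh, μ x = x) :
    ∑ j, ∑ x ∈ (Xc j \ Xh) ∪ X₀.filter (fun x => μ x ∈ Xc j ∩ Xh), dist x (f j)
      ≤ ∑ j, ∑ x ∈ Xc j, dist x (f j) + ∑ x ∈ X₀, dist x (μ x) :=
  stmt_11_general X₀ Xh k Xc f μ hdisj hdisj0 hbij
end

section
/- In the setting of the swapped partition, for z = 2 and any ε > 0: ∑_{j=1}^k ∑_{x ∈ X'_j} D(x, f_j)² ≤ (1+√ε) · ∑_{j=1}^k ∑_{x ∈ X_j} D(x, f_j)² + (1 + 1/√ε) · ∑_{x ∈ X₀} D(x, μ̂(x))². -/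
/-!
Pointwise, the triangle inequality through `μ x` and the weighted AM–GM inequality
`2ab ≤ a²/√ε + √ε b²` give `D(x, f_j)² ≤ (1 + 1/√ε) D(x, μ x)² + (1 + √ε) D(μ x, f_j)²`.
Summing over the points of `X₀` sent into `Z_j`, injectivity of `μ` bounds the second sum by the
cost of `Z_j ⊆ X_j`; the sets of these points are disjoint for different `j`, so the first sums
add up to at most the cost of `X₀`.
-/

open Finset Function

lemma add_sq_le_of_pos {a b t : ℝ} (ht : 0 < t) :
    (a + b) ^ 2 ≤ (1 + 1 / t) * a ^ 2 + (1 + t) * b ^ 2 := by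
  have hgap : (1 + 1 / t) * a ^ 2 + (1 + t) * b ^ 2 - (a + b) ^ 2 = (a - t * b) ^ 2 / t := by
    field_simp
    ring
  linarith [div_nonneg (sq_nonneg (a - t * b)) ht.le]

lemma dist_sq_le_of_pos {α : Type*} [PseudoMetricSpace α] (x y z : α) {t : ℝ} (ht : 0 < t) :
    dist x z ^ 2 ≤ (1 + 1 / t) * dist x y ^ 2 + (1 + t) * dist y z ^ 2 :=
  (pow_le_pow_left₀ dist_nonneg (dist_triangle x y z) 2).trans (add_sq_le_of_pos ht)

namespace Finset

variable {α β ι M : Type*} [AddCommMonoid M] [PartialOrder M] [IsOrderedAddMonoid M]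

lemma sum_union_le_of_nonneg [DecidableEq α] {s t : Finset α} {g : α → M}
    (hg : ∀ x ∈ s ∩ t, 0 ≤ g x) :
    ∑ x ∈ s ∪ t, g x ≤ ∑ x ∈ s, g x + ∑ x ∈ t, g x := by
  rw [← sum_union_inter]
  exact le_add_of_nonneg_right (sum_nonneg hg)

lemma sum_comp_le_of_injOn [DecidableEq α] {s : Finset β} {t : Finset α} {μ : β → α} {g : α → M}
    (hinj : Set.InjOn μ s) (hmaps : ∀ x ∈ s, μ x ∈ t) (hg : ∀ y ∈ t, 0 ≤ g y) :
    ∑ x ∈ s, g (μ x) ≤ ∑ y ∈ t, g y := by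
  rw [← sum_image hinj]
  exact sum_le_sum_of_subset_of_nonneg (image_subset_iff.2 hmaps) fun y hy _ ↦ hg y hy

lemma sum_sum_filter_le_of_pairwise_disjoint [Fintype ι] [DecidableEq α] {s : Finset β}
    {μ : β → α} {T : ι → Finset α} (hT : Pairwise (Disjoint on T)) {g : β → M} (hg : ∀ x ∈ s, 0 ≤ g x) :
    ∑ j, ∑ x ∈ s.filter (fun x ↦ μ x ∈ T j), g x ≤ ∑ x ∈ s, g x := by
  classical
  have hdisj : (↑(univ : Finset ι) : Set ι).PairwiseDisjoint fun j ↦ s.filter (fun x ↦ μ x ∈ T j) :=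
    fun i _ j _ hij ↦ disjoint_left.2 fun _ hi hj ↦
      disjoint_left.1 (hT hij) (mem_filter.1 hi).2 (mem_filter.1 hj).2
  rw [← sum_biUnion hdisj]
  exact sum_le_sum_of_subset_of_nonneg (biUnion_subset.2 fun _ _ ↦ filter_subset _ _)
    fun x hx _ ↦ hg x hx

end Finset

lemma sum_dist_sq_swap_le {α : Type*} [PseudoMetricSpace α] [DecidableEq α]
    (C Z B : Finset α) (c : α) {μ : α → α} (hinj : Set.InjOn μ B) (hmaps : ∀ x ∈ B, μ x ∈ C ∩ Z)
    {t : ℝ} (ht : 0 < t) :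
    ∑ x ∈ (C \ Z) ∪ B, dist x c ^ 2
      ≤ (1 + t) * ∑ x ∈ C, dist x c ^ 2 + (1 + 1 / t) * ∑ x ∈ B, dist x (μ x) ^ 2 := by
  have hpoint : ∑ x ∈ B, dist x c ^ 2
      ≤ (1 + 1 / t) * ∑ x ∈ B, dist x (μ x) ^ 2 + (1 + t) * ∑ x ∈ B, dist (μ x) c ^ 2 := by
    rw [mul_sum, mul_sum, ← sum_add_distrib]
    exact sum_le_sum fun x _ ↦ dist_sq_le_of_pos x (μ x) c ht
  have himage : ∑ x ∈ B, dist (μ x) c ^ 2 ≤ ∑ y ∈ C ∩ Z, dist y c ^ 2 :=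
    sum_comp_le_of_injOn (g := fun y ↦ dist y c ^ 2) hinj hmaps fun _ _ ↦ sq_nonneg _
  have hsplit := sum_inter_add_sum_sdiff C Z fun x ↦ dist x c ^ 2
  have hrest : 0 ≤ ∑ x ∈ C \ Z, dist x c ^ 2 := sum_nonneg fun _ _ ↦ sq_nonneg _
  have hunion := sum_union_le_of_nonneg (s := C \ Z) (t := B) fun x _ ↦ sq_nonneg (dist x c)
  nlinarith [mul_nonneg ht.le hrest]

theorem stmt_12_general {𝒳 : Type*} [MetricSpace 𝒳] [DecidableEq 𝒳]
    (X₀ Xh : Finset 𝒳) (k : ℕ) (Xc : Fin k → Finset 𝒳) (f : Fin k → 𝒳) (μ : 𝒳 → 𝒳)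
    (ε : ℝ) (hε : 0 < ε)
    (hdisj : ∀ i j, i ≠ j → Disjoint (Xc i) (Xc j))
    (hbij : Set.BijOn μ ↑X₀ ↑Xh) :
    ∑ j, ∑ x ∈ (Xc j \ Xh) ∪ X₀.filter (fun x => μ x ∈ Xc j ∩ Xh), dist x (f j) ^ 2
      ≤ (1 + Real.sqrt ε) * ∑ j, ∑ x ∈ Xc j, dist x (f j) ^ 2
        + (1 + 1 / Real.sqrt ε) * ∑ x ∈ X₀, dist x (μ x) ^ 2 := by
  have hs : 0 < Real.sqrt ε := Real.sqrt_pos.2 hε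
  have hZ : Pairwise (Disjoint on fun j ↦ Xc j ∩ Xh) := fun i j hij ↦
    (hdisj i j hij).mono inter_subset_left inter_subset_left
  calc _ ≤ ∑ j, ((1 + Real.sqrt ε) * ∑ x ∈ Xc j, dist x (f j) ^ 2
          + (1 + 1 / Real.sqrt ε) * ∑ x ∈ X₀.filter (fun x => μ x ∈ Xc j ∩ Xh), dist x (μ x) ^ 2) :=
        sum_le_sum fun j _ ↦ sum_dist_sq_swap_le _ _ _ _
          (hbij.injOn.mono (filter_subset _ _)) (fun _ hx ↦ (mem_filter.1 hx).2) hs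
    _ = (1 + Real.sqrt ε) * ∑ j, ∑ x ∈ Xc j, dist x (f j) ^ 2
          + (1 + 1 / Real.sqrt ε) * ∑ j, ∑ x ∈ X₀.filter (fun x => μ x ∈ Xc j ∩ Xh),
            dist x (μ x) ^ 2 := by
        rw [sum_add_distrib, ← mul_sum, ← mul_sum]
    _ ≤ _ := by
        gcongr
        exact sum_sum_filter_le_of_pairwise_disjoint hZ fun _ _ ↦ sq_nonneg _

theorem stmt_12 {𝒳 : Type*} [MetricSpace 𝒳] [DecidableEq 𝒳]
    (X X₀ Xh : Finset 𝒳) (k : ℕ) (Xc : Fin k → Finset 𝒳) (f : Fin k → 𝒳) (μ : 𝒳 → 𝒳)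
    (ε : ℝ) (hε : 0 < ε)
    (h0 : X₀ ⊆ X) (hh : Xh ⊆ X) (hcard : Xh.card = X₀.card)
    (hdisj : ∀ i j, i ≠ j → Disjoint (Xc i) (Xc j))
    (hdisj0 : ∀ i, Disjoint X₀ (Xc i))
    (hcover : X₀ ∪ Finset.univ.biUnion Xc = X)
    (hbij : Set.BijOn μ ↑X₀ ↑Xh)
    (hid : ∀ x ∈ X₀ ∩ Xh, μ x = x) :
    ∑ j, ∑ x ∈ (Xc j \ Xh) ∪ X₀.filter (fun x => μ x ∈ Xc j ∩ Xh), dist x (f j) ^ 2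
      ≤ (1 + Real.sqrt ε) * ∑ j, ∑ x ∈ Xc j, dist x (f j) ^ 2
        + (1 + 1 / Real.sqrt ε) * ∑ x ∈ X₀, dist x (μ x) ^ 2 :=
  stmt_12_general X₀ Xh k Xc f μ ε hε hdisj hbij
end

section
/- Let A, B be finite subsets of a metric space with |A| = |B| = m and let μ̂ : A → B be a bijection that is the identity on A ∩ B and satisfies ∑_{x∈A} D(x, μ̂(x)) ≤ δ. Let X be a finite set containing A, with partition A, X₁, …, X_k, centers f₁, …, f_k, and total cost V = ∑_j ∑_{x∈X_j} D(x, f_j). Define X'_j = (X_j ∖ (X_j ∩ B)) ∪ μ̂⁻¹(X_j ∩ B). Then ∑_j ∑_{x ∈ X'_j} D(x, f_j) ≤ V + δ. -/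
/-! Moving the points of `B ∩ X_j` back to their preimages under `μ̂` costs, by the triangle
inequality `D(x, f_j) ≤ D(x, μ̂ x) + D(μ̂ x, f_j)`, at most the old cost of `B ∩ X_j` plus the
matching cost of the moved points. Since the clusters are disjoint, each `x ∈ A` is moved into at
most one cluster, so the extra matching costs add up to at most `∑_{x ∈ A} D(x, μ̂ x) ≤ δ`. -/

open Finset

section

variable {α β ι M : Type*} [AddCommMonoid M] [PartialOrder M] [IsOrderedAddMonoid M]

theorem Finset.sum_union_le_of_nonneg_s17 [DecidableEq α] {s t : Finset α} {g : α → M}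
    (hg : ∀ x ∈ s ∩ t, 0 ≤ g x) :
    ∑ x ∈ s ∪ t, g x ≤ ∑ x ∈ s, g x + ∑ x ∈ t, g x := by
  rw [← sum_union_inter]
  exact le_add_of_nonneg_right (sum_nonneg hg)

theorem Finset.sum_filter_comp_le_of_injOn [DecidableEq β] {s : Finset α} {t : Finset β}
    {μ : α → β} {g : β → M} (hμ : Set.InjOn μ s) (hg : ∀ y ∈ t, 0 ≤ g y) :
    ∑ x ∈ s.filter (fun x => μ x ∈ t), g (μ x) ≤ ∑ y ∈ t, g y := by
  rw [← sum_image (hμ.mono (coe_subset.2 (filter_subset _ s)))]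
  exact sum_le_sum_of_subset_of_nonneg
    (image_subset_iff.2 fun x hx => (mem_filter.1 hx).2) fun y hy _ => hg y hy

theorem Finset.sum_sum_filter_mem_le_of_pairwiseDisjoint [DecidableEq α] [DecidableEq β]
    {I : Finset ι} {S : ι → Finset β} (hS : (I : Set ι).PairwiseDisjoint S) {s : Finset α}
    {μ : α → β} {g : α → M} (hg : ∀ x ∈ s, 0 ≤ g x) :
    ∑ i ∈ I, ∑ x ∈ s.filter (fun x => μ x ∈ S i), g x ≤ ∑ x ∈ s, g x := by
  have hfib : (I : Set ι).PairwiseDisjoint fun i => s.filter (fun x => μ x ∈ S i) :=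
    fun i hi j hj hij => disjoint_left.2 fun x hx hx' =>
      disjoint_left.1 (hS hi hj hij) (mem_filter.1 hx).2 (mem_filter.1 hx').2
  rw [← sum_biUnion hfib]
  exact sum_le_sum_of_subset_of_nonneg (biUnion_subset.2 fun i _ => filter_subset _ s)
    fun x hx _ => hg x hx

end

theorem sum_dist_reassign_le {𝒳 : Type*} [PseudoMetricSpace 𝒳] [DecidableEq 𝒳]
    {A C T : Finset 𝒳} {μ : 𝒳 → 𝒳} (hμ : Set.InjOn μ A) (hT : T ⊆ C) (c : 𝒳) :
    ∑ x ∈ (C \ T) ∪ A.filter (fun x => μ x ∈ T), dist x c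
      ≤ ∑ x ∈ C, dist x c + ∑ x ∈ A.filter (fun x => μ x ∈ T), dist x (μ x) := by
  set F := A.filter (fun x => μ x ∈ T)
  calc ∑ x ∈ (C \ T) ∪ F, dist x c
      ≤ ∑ x ∈ C \ T, dist x c + ∑ x ∈ F, dist x c :=
        sum_union_le_of_nonneg_s17 (g := (dist · c)) fun _ _ => dist_nonneg
    _ ≤ ∑ x ∈ C \ T, dist x c + (∑ x ∈ F, dist x (μ x) + ∑ x ∈ F, dist (μ x) c) := by
        rw [← sum_add_distrib]
        gcongr with x
        exact dist_triangle x (μ x) c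
    _ ≤ ∑ x ∈ C \ T, dist x c + (∑ x ∈ F, dist x (μ x) + ∑ y ∈ T, dist y c) := by
        gcongr
        exact sum_filter_comp_le_of_injOn (g := (dist · c)) hμ fun _ _ => dist_nonneg
    _ = ∑ x ∈ C, dist x c + ∑ x ∈ F, dist x (μ x) := by
        rw [← sum_sdiff hT]
        ring

theorem stmt_17_general {𝒳 : Type*} [MetricSpace 𝒳] [DecidableEq 𝒳]
    (A B : Finset 𝒳)
    (k : ℕ) (Xc : Fin k → Finset 𝒳) (f : Fin k → 𝒳) (μ : 𝒳 → 𝒳) (δ : ℝ)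
    (hdisj : ∀ i j, i ≠ j → Disjoint (Xc i) (Xc j))
    (hbij : Set.BijOn μ ↑A ↑B)
    (hδ : ∑ x ∈ A, dist x (μ x) ≤ δ) :
    ∑ j, ∑ x ∈ (Xc j \ (Xc j ∩ B)) ∪ A.filter (fun x => μ x ∈ Xc j ∩ B), dist x (f j)
      ≤ (∑ j, ∑ x ∈ Xc j, dist x (f j)) + δ := by
  have hmoved : ∑ j, ∑ x ∈ A.filter (fun x => μ x ∈ Xc j ∩ B), dist x (μ x) ≤ δ :=
    (sum_sum_filter_mem_le_of_pairwiseDisjoint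
      (fun i _ j _ hij => (hdisj i j hij).mono inter_subset_left inter_subset_left)
      fun _ _ => dist_nonneg).trans hδ
  calc ∑ j, ∑ x ∈ (Xc j \ (Xc j ∩ B)) ∪ A.filter (fun x => μ x ∈ Xc j ∩ B), dist x (f j)
      ≤ ∑ j, (∑ x ∈ Xc j, dist x (f j)
          + ∑ x ∈ A.filter (fun x => μ x ∈ Xc j ∩ B), dist x (μ x)) :=
        sum_le_sum fun j _ => sum_dist_reassign_le hbij.injOn inter_subset_left (f j)
    _ ≤ (∑ j, ∑ x ∈ Xc j, dist x (f j)) + δ := by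
        rw [sum_add_distrib]
        gcongr

theorem stmt_17 {𝒳 : Type*} [MetricSpace 𝒳] [DecidableEq 𝒳] (m : ℕ)
    (A B X : Finset 𝒳) (hA : A.card = m) (hB : B.card = m) (hAX : A ⊆ X)
    (k : ℕ) (Xc : Fin k → Finset 𝒳) (f : Fin k → 𝒳) (μ : 𝒳 → 𝒳) (δ : ℝ)
    (hdisj : ∀ i j, i ≠ j → Disjoint (Xc i) (Xc j))
    (hdisj0 : ∀ i, Disjoint A (Xc i))
    (hcover : A ∪ Finset.univ.biUnion Xc = X)
    (hbij : Set.BijOn μ ↑A ↑B)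
    (hid : ∀ x ∈ A ∩ B, μ x = x)
    (hδ : ∑ x ∈ A, dist x (μ x) ≤ δ) :
    ∑ j, ∑ x ∈ (Xc j \ (Xc j ∩ B)) ∪ A.filter (fun x => μ x ∈ Xc j ∩ B), dist x (f j)
      ≤ (∑ j, ∑ x ∈ Xc j, dist x (f j)) + δ :=
  stmt_17_general A B k Xc f μ δ hdisj hbij hδ
end
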